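/- arXiv:1902.06073 — 2 statements merged into one kernel-verified Lean document; each statement's English description precedes it below -/
import Mathlib

section
/- For γ ∈ ℂ and every natural number k, there exists a polynomial B_k^γ on ℝ^n such that (∂/∂ξ_n)^k |ξ|^{2(γ+k)} = B_k^γ(ξ) · |ξ|^{2γ} on ℝ^n \ {0}, with B_0^γ = 1, and B_k^γ is homogeneous of degree k. -/
open MvPolynomial Complex

/-- Partial derivative in the `i`-th coordinate of a function on ℝ^m. -/
noncomputable def pd {m : ℕ} (i : Fin m) (f : (Fin m → ℝ) → ℂ) : (Fin m → ℝ) → ℂ :=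
  fun x => deriv (fun t => f (Function.update x i t)) (x i)

/-!
Write `Q = ∑ Xⱼ²`, so that `|ξ|² = Q(ξ)`. If `∂ᵏ Q^(γ+1+k) = B · Q^(γ+1)` on the open set where
`Q` lies in the slit plane, one more derivative, by the product rule and the chain rule for `cpow`,
gives `∂ᵏ⁺¹ Q^(γ+k+1) = (Q ∂B + (γ+1) (∂Q) B) · Q^γ` there. So `B_k^γ` is given by this recursion
in `k`, with `γ` shifted by one, and since `Q` is homogeneous of degree 2 every step raises the
degree by exactly one.
-/

open Filter Topology

namespace MvPolynomial

variable {σ R : Type*} [CommRing R]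

noncomputable def cpowDerivStep (Q : MvPolynomial σ R) (i : σ) (γ : R) (B : MvPolynomial σ R) :
    MvPolynomial σ R :=
  Q * pderiv i B + C (γ + 1) * pderiv i Q * B

noncomputable def cpowDerivPoly (Q : MvPolynomial σ R) (i : σ) : ℕ → R → MvPolynomial σ R
  | 0, _ => 1
  | k + 1, γ => cpowDerivStep Q i γ (cpowDerivPoly Q i k (γ + 1))

theorem IsHomogeneous.mul_pderiv {ψ φ : MvPolynomial σ R} {m n : ℕ}
    (hψ : ψ.IsHomogeneous (m + 1)) (hφ : φ.IsHomogeneous n) (i : σ) :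
    (ψ * pderiv i φ).IsHomogeneous (m + n) := by
  rcases n with _ | n
  · rw [← totalDegree_zero_iff_isHomogeneous, totalDegree_eq_zero_iff_eq_C] at hφ
    rw [hφ, pderiv_C, mul_zero]
    exact isHomogeneous_zero _ _ _
  · convert hψ.mul (hφ.pderiv (i := i)) using 1
    omega

theorem IsHomogeneous.cpowDerivStep {Q B : MvPolynomial σ R} {d e : ℕ}
    (hQ : Q.IsHomogeneous (d + 1)) (hB : B.IsHomogeneous e) (i : σ) (γ : R) :
    (cpowDerivStep Q i γ B).IsHomogeneous (d + e) := by
  refine (hQ.mul_pderiv hB i).add ?_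
  simpa using ((isHomogeneous_C σ (γ + 1)).mul hQ.pderiv).mul hB

theorem IsHomogeneous.cpowDerivPoly {Q : MvPolynomial σ R} {d : ℕ}
    (hQ : Q.IsHomogeneous (d + 1)) (i : σ) (k : ℕ) (γ : R) :
    (cpowDerivPoly Q i k γ).IsHomogeneous (d * k) := by
  induction k generalizing γ with
  | zero => exact isHomogeneous_one σ R
  | succ k ih =>
    rw [mul_add_one, add_comm (d * k)]
    exact hQ.cpowDerivStep (ih (γ + 1)) i γ

theorem hasDerivAt_eval_update {𝕜 : Type*} [NontriviallyNormedField 𝕜] [DecidableEq σ]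
    (p : MvPolynomial σ 𝕜) (c : σ → 𝕜) (i : σ) (z : 𝕜) :
    HasDerivAt (fun w => eval (Function.update c i w) p)
      (eval (Function.update c i z) (pderiv i p)) z := by
  induction p using MvPolynomial.induction_on with
  | C a => simpa using hasDerivAt_const z a
  | add p q hp hq =>
    simp only [map_add]
    exact hp.add hq
  | mul_X p j hp =>
    have hX : HasDerivAt (fun w => Function.update c i w j) ((Pi.single i 1 : σ → 𝕜) j) z :=
      hasDerivAt_pi.1 (hasDerivAt_update c i z) j
    have hpderivX : eval (Function.update c i z) (pderiv i (X j)) = (Pi.single i 1 : σ → 𝕜) j := by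
      rcases eq_or_ne j i with rfl | hji <;> simp [pderiv_X, *]
    simp only [map_mul, eval_X, pderiv_mul, map_add, hpderivX]
    exact hp.mul hX

end MvPolynomial

theorem pd_congr_of_eventuallyEq {m : ℕ} (i : Fin m) {f g : (Fin m → ℝ) → ℂ} {ξ : Fin m → ℝ}
    (h : f =ᶠ[𝓝 ξ] g) : pd i f ξ = pd i g ξ := by
  have hline : Tendsto (Function.update ξ i) (𝓝 (ξ i)) (𝓝 ξ) := by
    simpa using ((continuous_const (y := ξ)).update i continuous_id).tendsto (ξ i)
  exact (h.comp_tendsto hline).deriv_eq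

theorem pd_eval_mul_eval_cpow {m : ℕ} (Q B : MvPolynomial (Fin m) ℂ) (i : Fin m) (γ : ℂ)
    {ξ : Fin m → ℝ} (hξ : eval (fun j => (ξ j : ℂ)) Q ∈ slitPlane) :
    pd i (fun x => eval (fun j => (x j : ℂ)) B * eval (fun j => (x j : ℂ)) Q ^ (γ + 1)) ξ
      = eval (fun j => (ξ j : ℂ)) (cpowDerivStep Q i γ B) * eval (fun j => (ξ j : ℂ)) Q ^ γ := by
  set c : Fin m → ℂ := fun j => (ξ j : ℂ)
  have hline (t : ℝ) : (fun j => ((Function.update ξ i t j : ℝ) : ℂ)) = Function.update c i t :=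
    Function.comp_update ofReal ξ i t
  have hc : Function.update c i (ξ i : ℂ) = c := Function.update_eq_self i c
  have hB := hasDerivAt_eval_update B c i (ξ i)
  have hQ := hasDerivAt_eval_update Q c i (ξ i)
  rw [hc] at hB hQ
  have hBQ : HasDerivAt (fun t : ℝ => eval (Function.update c i t) B
      * eval (Function.update c i t) Q ^ (γ + 1)) _ (ξ i) :=
    (hB.mul (hQ.cpow_const (c := γ + 1) (by rwa [hc]))).comp_ofReal
  simp only [pd, hline]
  rw [hBQ.deriv, hc, cpowDerivStep, cpow_add _ _ (slitPlane_ne_zero hξ)]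
  simp only [eval_add, eval_mul, eval_C, add_sub_cancel_right, cpow_one]
  ring

theorem iterate_pd_cpow {m : ℕ} (Q : MvPolynomial (Fin m) ℂ) (i : Fin m) (k : ℕ) (γ : ℂ)
    {ξ : Fin m → ℝ} (hξ : eval (fun j => (ξ j : ℂ)) Q ∈ slitPlane) :
    (pd i)^[k] (fun x => eval (fun j => (x j : ℂ)) Q ^ (γ + k)) ξ
      = eval (fun j => (ξ j : ℂ)) (cpowDerivPoly Q i k γ) * eval (fun j => (ξ j : ℂ)) Q ^ γ := by
  induction k generalizing γ ξ with
  | zero => simp [cpowDerivPoly]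
  | succ k ih =>
    have hopen : IsOpen {x : Fin m → ℝ | eval (fun j => (x j : ℂ)) Q ∈ slitPlane} :=
      isOpen_slitPlane.preimage (continuous_eval Q |>.comp (by fun_prop))
    have hnear : (pd i)^[k] (fun x => eval (fun j => (x j : ℂ)) Q ^ (γ + 1 + k)) =ᶠ[𝓝 ξ]
        fun x => eval (fun j => (x j : ℂ)) (cpowDerivPoly Q i k (γ + 1))
          * eval (fun j => (x j : ℂ)) Q ^ (γ + 1) :=
      eventually_of_mem (hopen.mem_nhds hξ) fun x hx => ih (γ + 1) hx
    rw [Function.iterate_succ_apply', show γ + (k + 1 : ℕ) = γ + 1 + k by push_cast; ring,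
      pd_congr_of_eventuallyEq i hnear]
    exact pd_eval_mul_eval_cpow _ _ i γ hξ

theorem stmt5 (n : ℕ) (γ : ℂ) (k : ℕ) :
    ∃ B : MvPolynomial (Fin (n + 1)) ℂ,
      B.IsHomogeneous k ∧ (k = 0 → B = 1) ∧
      ∀ ξ : Fin (n + 1) → ℝ, ξ ≠ 0 →
        ((pd (Fin.last n))^[k]
            (fun x => ((∑ j, x j ^ 2 : ℝ) : ℂ) ^ (γ + k))) ξ
          = MvPolynomial.eval (fun j => (ξ j : ℂ)) B * ((∑ j, ξ j ^ 2 : ℝ) : ℂ) ^ γ := by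
  set Q : MvPolynomial (Fin (n + 1)) ℂ := ∑ j, X j ^ 2
  have hQ : Q.IsHomogeneous (1 + 1) :=
    IsHomogeneous.sum _ _ _ fun j _ => (isHomogeneous_X ℂ j).pow 2
  have hQ_eval (x : Fin (n + 1) → ℝ) :
      eval (fun j => (x j : ℂ)) Q = ((∑ j, x j ^ 2 : ℝ) : ℂ) := by
    simp [Q]
  refine ⟨cpowDerivPoly Q (Fin.last n) k γ, by simpa using hQ.cpowDerivPoly (Fin.last n) k γ,
    by rintro rfl; rfl, fun ξ hξ => ?_⟩
  obtain ⟨j, hj⟩ := Function.ne_iff.mp hξ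
  have hpos : 0 < ∑ j, ξ j ^ 2 :=
    Finset.sum_pos' (fun _ _ => sq_nonneg _) ⟨j, Finset.mem_univ j, pow_two_pos_of_ne_zero hj⟩
  simp only [← hQ_eval]
  exact iterate_pd_cpow Q _ k γ (by rw [hQ_eval]; exact ofReal_mem_slitPlane.2 hpos)
end

section
/- Let q(∂) = Σ_{j=1}^n (∂/∂ξ_j - ∂/∂η_j)² acting on functions on ℝ^n × ℝ^n. For α, β ∈ ℂ and every natural number k, there exists a polynomial p_k^{α,β}(ξ,η), homogeneous of degree 2k, such that q(∂)^k (|ξ|^{2(α+k)} |η|^{2(β+k)}) = p_k^{α,β}(ξ,η) |ξ|^{2α} |η|^{2β} on {ξ ≠ 0, η ≠ 0}, with p_0^{α,β} = 1. -/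
open MvPolynomial Complex

/-- Partial derivative in the `i`-th coordinate of the first variable. -/
noncomputable def pd1 {m : ℕ} (i : Fin m) (f : (Fin m → ℝ) → (Fin m → ℝ) → ℂ) :
    (Fin m → ℝ) → (Fin m → ℝ) → ℂ :=
  fun ξ η => deriv (fun t => f (Function.update ξ i t) η) (ξ i)

/-- Partial derivative in the `i`-th coordinate of the second variable. -/
noncomputable def pd2 {m : ℕ} (i : Fin m) (f : (Fin m → ℝ) → (Fin m → ℝ) → ℂ) :
    (Fin m → ℝ) → (Fin m → ℝ) → ℂ :=
  fun ξ η => deriv (fun t => f ξ (Function.update η i t)) (η i)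

/-- The operator `∂/∂ξ_i − ∂/∂η_i`. -/
noncomputable def Dj {m : ℕ} (i : Fin m) (f : (Fin m → ℝ) → (Fin m → ℝ) → ℂ) :
    (Fin m → ℝ) → (Fin m → ℝ) → ℂ :=
  fun ξ η => pd1 i f ξ η - pd2 i f ξ η

/-- The difference Laplacian `q(∂) = Σ_j (∂/∂ξ_j − ∂/∂η_j)²`. -/
noncomputable def Qop {m : ℕ} (f : (Fin m → ℝ) → (Fin m → ℝ) → ℂ) :
    (Fin m → ℝ) → (Fin m → ℝ) → ℂ :=
  fun ξ η => ∑ i, Dj i (Dj i f) ξ η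

/-! Write `weighted p a b` for `p(ξ, η) |ξ|^{2a} |η|^{2b}` on `ξ ≠ 0, η ≠ 0`. By the chain rule,
`∂/∂ξ_i − ∂/∂η_i` maps `weighted p a b` to `weighted (djPoly a b i p) (a - 1) (b - 1)`, where
`djPoly` raises the degree by three. Applying it twice and summing over `i` gives a polynomial
divisible by `|ξ|² |η|²`, because the terms without that factor carry `ξ_i²` or `η_i²` and
`∑ᵢ ξ_i² = |ξ|²`. So `q(∂)` maps `weighted p a b` to `weighted (qopPoly a b p) (a - 1) (b - 1)`
with `qopPoly` raising the degree by two; iterate `k` times starting from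
`weighted 1 (α + k) (β + k)`. -/

section Polynomial

variable {n : ℕ}

noncomputable def sqNormLeft (n : ℕ) : MvPolynomial (Fin n ⊕ Fin n) ℂ := ∑ j, X (Sum.inl j) ^ 2

noncomputable def sqNormRight (n : ℕ) : MvPolynomial (Fin n ⊕ Fin n) ℂ := ∑ j, X (Sum.inr j) ^ 2

noncomputable def diffPderiv (i : Fin n) (p : MvPolynomial (Fin n ⊕ Fin n) ℂ) :
    MvPolynomial (Fin n ⊕ Fin n) ℂ :=
  pderiv (Sum.inl i) p - pderiv (Sum.inr i) p

noncomputable def djPoly (a b : ℂ) (i : Fin n) (p : MvPolynomial (Fin n ⊕ Fin n) ℂ) :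
    MvPolynomial (Fin n ⊕ Fin n) ℂ :=
  sqNormLeft n * sqNormRight n * diffPderiv i p + C (2 * a) * (X (Sum.inl i) * sqNormRight n * p)
    - C (2 * b) * (X (Sum.inr i) * sqNormLeft n * p)

noncomputable def qopPoly (a b : ℂ) (p : MvPolynomial (Fin n ⊕ Fin n) ℂ) :
    MvPolynomial (Fin n ⊕ Fin n) ℂ :=
  ∑ i, (diffPderiv i (djPoly a b i p)
      + C (2 * (a - 1)) * (X (Sum.inl i) * sqNormRight n * diffPderiv i p)
      - C (2 * (b - 1)) * (X (Sum.inr i) * sqNormLeft n * diffPderiv i p)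
      - C (4 * ((a - 1) * b + a * (b - 1))) * (X (Sum.inl i) * X (Sum.inr i) * p))
    + C (4 * a * (a - 1)) * (sqNormRight n * p) + C (4 * b * (b - 1)) * (sqNormLeft n * p)

theorem sum_djPoly_djPoly (a b : ℂ) (p : MvPolynomial (Fin n ⊕ Fin n) ℂ) :
    ∑ i, djPoly (a - 1) (b - 1) i (djPoly a b i p)
      = sqNormLeft n * sqNormRight n * qopPoly a b p := by
  have expand : ∀ i, djPoly (a - 1) (b - 1) i (djPoly a b i p)
      = sqNormLeft n * sqNormRight n * (diffPderiv i (djPoly a b i p)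
          + C (2 * (a - 1)) * (X (Sum.inl i) * sqNormRight n * diffPderiv i p)
          - C (2 * (b - 1)) * (X (Sum.inr i) * sqNormLeft n * diffPderiv i p)
          - C (4 * ((a - 1) * b + a * (b - 1))) * (X (Sum.inl i) * X (Sum.inr i) * p))
        + C (4 * a * (a - 1)) * (sqNormRight n * sqNormRight n * p) * X (Sum.inl i) ^ 2
        + C (4 * b * (b - 1)) * (sqNormLeft n * sqNormLeft n * p) * X (Sum.inr i) ^ 2 := by
    intro i
    simp only [djPoly, map_mul, map_sub, map_add, map_one, map_ofNat]
    ring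
  have sum_left : ∑ i, X (Sum.inl i) ^ 2 = sqNormLeft n := rfl
  have sum_right : ∑ i, X (Sum.inr i) ^ 2 = sqNormRight n := rfl
  simp only [Finset.sum_congr rfl fun i _ => expand i, Finset.sum_add_distrib, ← Finset.mul_sum,
    sum_left, sum_right, qopPoly]
  ring

theorem MvPolynomial.IsHomogeneous.mul_pderiv_s14 {R σ : Type*} [CommSemiring R]
    {p q : MvPolynomial σ R} {d e : ℕ}
    (hq : q.IsHomogeneous (e + 1)) (hp : p.IsHomogeneous d) (s : σ) :
    (q * pderiv s p).IsHomogeneous (e + d) := by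
  obtain _ | d := d
  · rw [← totalDegree_zero_iff_isHomogeneous, totalDegree_eq_zero_iff_eq_C] at hp
    rw [hp, pderiv_C, mul_zero]
    exact isHomogeneous_zero _ _ _
  · simpa [add_assoc, add_comm 1] using hq.mul hp.pderiv

theorem isHomogeneous_mul_diffPderiv {p q : MvPolynomial (Fin n ⊕ Fin n) ℂ} {d e : ℕ}
    (hq : q.IsHomogeneous (e + 1)) (hp : p.IsHomogeneous d) (i : Fin n) :
    (q * diffPderiv i p).IsHomogeneous (e + d) := by
  rw [diffPderiv, mul_sub]
  exact (hq.mul_pderiv_s14 hp _).sub (hq.mul_pderiv_s14 hp _)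

theorem isHomogeneous_diffPderiv {p : MvPolynomial (Fin n ⊕ Fin n) ℂ} {d : ℕ}
    (hp : p.IsHomogeneous (d + 1)) (i : Fin n) : (diffPderiv i p).IsHomogeneous d :=
  hp.pderiv.sub hp.pderiv

theorem isHomogeneous_sqNormLeft : (sqNormLeft n).IsHomogeneous 2 :=
  IsHomogeneous.sum _ _ _ fun _ _ => isHomogeneous_X_pow _ 2

theorem isHomogeneous_sqNormRight : (sqNormRight n).IsHomogeneous 2 :=
  IsHomogeneous.sum _ _ _ fun _ _ => isHomogeneous_X_pow _ 2

theorem isHomogeneous_djPoly {p : MvPolynomial (Fin n ⊕ Fin n) ℂ} {d : ℕ}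
    (hp : p.IsHomogeneous d) (a b : ℂ) (i : Fin n) : (djPoly a b i p).IsHomogeneous (d + 3) := by
  have h₁ := isHomogeneous_mul_diffPderiv (e := 3)
    (isHomogeneous_sqNormLeft.mul isHomogeneous_sqNormRight) hp i
  have h₂ := ((isHomogeneous_X ℂ (Sum.inl i)).mul isHomogeneous_sqNormRight).mul hp
  have h₃ := ((isHomogeneous_X ℂ (Sum.inr i)).mul isHomogeneous_sqNormLeft).mul hp
  rw [add_comm] at h₁ h₂ h₃
  exact (h₁.add (h₂.C_mul _)).sub (h₃.C_mul _)

theorem isHomogeneous_qopPoly {p : MvPolynomial (Fin n ⊕ Fin n) ℂ} {d : ℕ}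
    (hp : p.IsHomogeneous d) (a b : ℂ) : (qopPoly a b p).IsHomogeneous (d + 2) := by
  have h₀ := isHomogeneous_sqNormRight.mul hp
  have h₀' := isHomogeneous_sqNormLeft.mul hp
  rw [add_comm] at h₀ h₀'
  refine (IsHomogeneous.sum _ _ _ fun i _ => ?_).add (h₀.C_mul _) |>.add (h₀'.C_mul _)
  have h₁ := isHomogeneous_mul_diffPderiv (e := 2)
    ((isHomogeneous_X ℂ (Sum.inl i)).mul isHomogeneous_sqNormRight) hp i
  have h₂ := isHomogeneous_mul_diffPderiv (e := 2)
    ((isHomogeneous_X ℂ (Sum.inr i)).mul isHomogeneous_sqNormLeft) hp i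
  have h₃ := ((isHomogeneous_X ℂ (Sum.inl i)).mul (isHomogeneous_X ℂ (Sum.inr i))).mul hp
  rw [add_comm] at h₁ h₂ h₃
  exact ((isHomogeneous_diffPderiv (isHomogeneous_djPoly hp a b i) i).add (h₁.C_mul _)).sub
    (h₂.C_mul _) |>.sub (h₃.C_mul _)

noncomputable def qopIterPoly (a b : ℂ) : ℕ → MvPolynomial (Fin n ⊕ Fin n) ℂ
  | 0 => 1
  | j + 1 => qopPoly (a - j) (b - j) (qopIterPoly a b j)

theorem isHomogeneous_qopIterPoly (a b : ℂ) (j : ℕ) :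
    (qopIterPoly (n := n) a b j).IsHomogeneous (2 * j) := by
  induction j with
  | zero => exact isHomogeneous_one _ _
  | succ j ih => exact (mul_add_one 2 j).symm ▸ isHomogeneous_qopPoly ih _ _

end Polynomial

theorem cpow_eq_cpow_sub_one_mul {x : ℂ} (hx : x ≠ 0) (a : ℂ) : x ^ a = x ^ (a - 1) * x := by
  conv_lhs => rw [← sub_add_cancel a 1, cpow_add _ _ hx, cpow_one]

section Calculus

variable {n : ℕ}

noncomputable def sqNorm (u : Fin n → ℝ) : ℂ := ((∑ j, u j ^ 2 : ℝ) : ℂ)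

noncomputable def pairPoint (ξ η : Fin n → ℝ) : Fin n ⊕ Fin n → ℂ :=
  Sum.elim (fun j => (ξ j : ℂ)) (fun j => (η j : ℂ))

noncomputable def weighted (p : MvPolynomial (Fin n ⊕ Fin n) ℂ) (a b : ℂ) :
    (Fin n → ℝ) → (Fin n → ℝ) → ℂ :=
  fun ξ η => eval (pairPoint ξ η) p * sqNorm ξ ^ a * sqNorm η ^ b

def EqOnPunctured (f g : (Fin n → ℝ) → (Fin n → ℝ) → ℂ) : Prop :=
  ∀ ξ η, ξ ≠ 0 → η ≠ 0 → f ξ η = g ξ η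

theorem sum_sq_pos_of_ne_zero {ξ : Fin n → ℝ} (hξ : ξ ≠ 0) : 0 < ∑ j, ξ j ^ 2 := by
  obtain ⟨j, hj⟩ := Function.ne_iff.mp hξ
  exact Finset.sum_pos' (fun i _ => sq_nonneg _) ⟨j, Finset.mem_univ j, sq_pos_of_ne_zero hj⟩

theorem sqNorm_mem_slitPlane {ξ : Fin n → ℝ} (hξ : ξ ≠ 0) : sqNorm ξ ∈ slitPlane :=
  ofReal_mem_slitPlane.mpr (sum_sq_pos_of_ne_zero hξ)

theorem sqNorm_ne_zero {ξ : Fin n → ℝ} (hξ : ξ ≠ 0) : sqNorm ξ ≠ 0 :=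
  slitPlane_ne_zero (sqNorm_mem_slitPlane hξ)

theorem eval_sqNormLeft (ξ η : Fin n → ℝ) : eval (pairPoint ξ η) (sqNormLeft n) = sqNorm ξ := by
  simp [pairPoint, sqNormLeft, sqNorm]

theorem eval_sqNormRight (ξ η : Fin n → ℝ) : eval (pairPoint ξ η) (sqNormRight n) = sqNorm η := by
  simp [pairPoint, sqNormRight, sqNorm]

theorem pairPoint_update_left (ξ η : Fin n → ℝ) (i : Fin n) (t : ℝ) :
    pairPoint (Function.update ξ i t) η = Function.update (pairPoint ξ η) (Sum.inl i) (t : ℂ) := by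
  rw [pairPoint, pairPoint, ← Sum.elim_update_left]
  congr 1
  exact Function.comp_update ofReal ξ i t

theorem pairPoint_update_right (ξ η : Fin n → ℝ) (i : Fin n) (t : ℝ) :
    pairPoint ξ (Function.update η i t) = Function.update (pairPoint ξ η) (Sum.inr i) (t : ℂ) := by
  rw [pairPoint, pairPoint, ← Sum.elim_update_right]
  congr 1
  exact Function.comp_update ofReal η i t

theorem MvPolynomial.hasDerivAt_eval_update_s14 {𝕜 σ : Type*} [NontriviallyNormedField 𝕜]
    [DecidableEq σ] (p : MvPolynomial σ 𝕜) (v : σ → 𝕜) (s : σ) :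
    HasDerivAt (fun t => eval (Function.update v s t) p) (eval v (pderiv s p)) (v s) := by
  induction p using MvPolynomial.induction_on with
  | C c => simpa using hasDerivAt_const (v s) c
  | add p q hp hq => simpa using hp.fun_add hq
  | mul_X p s' hp =>
    by_cases h : s' = s
    · subst h
      simpa [pderiv_mul, add_comm, mul_comm] using hp.fun_mul (hasDerivAt_id' _)
    · simpa [pderiv_mul, pderiv_X_of_ne h, Function.update_of_ne h, mul_comm]
        using hp.mul_const (v s')

theorem hasDerivAt_eval_pairPoint_update_left (p : MvPolynomial (Fin n ⊕ Fin n) ℂ)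
    (ξ η : Fin n → ℝ) (i : Fin n) :
    HasDerivAt (fun t : ℝ => eval (pairPoint (Function.update ξ i t) η) p)
      (eval (pairPoint ξ η) (pderiv (Sum.inl i) p)) (ξ i) := by
  simp only [pairPoint_update_left]
  exact (hasDerivAt_eval_update_s14 p (pairPoint ξ η) (Sum.inl i)).comp_ofReal

theorem hasDerivAt_eval_pairPoint_update_right (p : MvPolynomial (Fin n ⊕ Fin n) ℂ)
    (ξ η : Fin n → ℝ) (i : Fin n) :
    HasDerivAt (fun t : ℝ => eval (pairPoint ξ (Function.update η i t)) p)
      (eval (pairPoint ξ η) (pderiv (Sum.inr i) p)) (η i) := by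
  simp only [pairPoint_update_right]
  exact (hasDerivAt_eval_update_s14 p (pairPoint ξ η) (Sum.inr i)).comp_ofReal

theorem hasDerivAt_sqNorm_update (ξ : Fin n → ℝ) (i : Fin n) :
    HasDerivAt (fun t : ℝ => sqNorm (Function.update ξ i t)) (2 * ξ i) (ξ i) := by
  simp only [← eval_sqNormLeft _ ξ]
  convert hasDerivAt_eval_pairPoint_update_left (sqNormLeft n) ξ ξ i using 1
  simp [sqNormLeft, pairPoint, pderiv_X, Pi.single_apply]

theorem hasDerivAt_sqNorm_update_cpow (a : ℂ) {ξ : Fin n → ℝ} (hξ : ξ ≠ 0) (i : Fin n) :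
    HasDerivAt (fun t : ℝ => sqNorm (Function.update ξ i t) ^ a)
      (a * sqNorm ξ ^ (a - 1) * (2 * ξ i)) (ξ i) :=
  (hasStrictDerivAt_cpow_const (sqNorm_mem_slitPlane hξ)).hasDerivAt.comp_of_eq (ξ i)
    (hasDerivAt_sqNorm_update ξ i) (by simp)

theorem hasDerivAt_weighted_update_left (p : MvPolynomial (Fin n ⊕ Fin n) ℂ) (a b : ℂ)
    {ξ : Fin n → ℝ} (hξ : ξ ≠ 0) (η : Fin n → ℝ) (i : Fin n) :
    HasDerivAt (fun t : ℝ => weighted p a b (Function.update ξ i t) η)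
      ((eval (pairPoint ξ η) (pderiv (Sum.inl i) p) * sqNorm ξ ^ a
        + eval (pairPoint ξ η) p * (a * sqNorm ξ ^ (a - 1) * (2 * ξ i))) * sqNorm η ^ b) (ξ i) := by
  have h := ((hasDerivAt_eval_pairPoint_update_left p ξ η i).fun_mul
    (hasDerivAt_sqNorm_update_cpow a hξ i)).mul_const (sqNorm η ^ b)
  rwa [Function.update_eq_self] at h

theorem hasDerivAt_weighted_update_right (p : MvPolynomial (Fin n ⊕ Fin n) ℂ) (a b : ℂ)
    (ξ : Fin n → ℝ) {η : Fin n → ℝ} (hη : η ≠ 0) (i : Fin n) :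
    HasDerivAt (fun t : ℝ => weighted p a b ξ (Function.update η i t))
      (eval (pairPoint ξ η) (pderiv (Sum.inr i) p) * sqNorm ξ ^ a * sqNorm η ^ b
        + eval (pairPoint ξ η) p * sqNorm ξ ^ a * (b * sqNorm η ^ (b - 1) * (2 * η i))) (η i) := by
  have h := ((hasDerivAt_eval_pairPoint_update_right p ξ η i).mul_const (sqNorm ξ ^ a)).fun_mul
    (hasDerivAt_sqNorm_update_cpow b hη i)
  rwa [Function.update_eq_self] at h

theorem Dj_weighted (p : MvPolynomial (Fin n ⊕ Fin n) ℂ) (a b : ℂ) (i : Fin n) :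
    EqOnPunctured (Dj i (weighted p a b)) (weighted (djPoly a b i p) (a - 1) (b - 1)) := by
  intro ξ η hξ hη
  simp only [Dj, pd1, pd2]
  rw [(hasDerivAt_weighted_update_left p a b hξ η i).deriv,
    (hasDerivAt_weighted_update_right p a b ξ hη i).deriv]
  simp only [weighted, djPoly, diffPderiv, map_add, map_sub, map_mul, eval_C, eval_X,
    eval_sqNormLeft, eval_sqNormRight]
  rw [cpow_eq_cpow_sub_one_mul (sqNorm_ne_zero hξ) a,
    cpow_eq_cpow_sub_one_mul (sqNorm_ne_zero hη) b]
  simp only [pairPoint, Sum.elim_inl, Sum.elim_inr]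
  ring

theorem weighted_sum {ι : Type*} (s : Finset ι) (f : ι → MvPolynomial (Fin n ⊕ Fin n) ℂ)
    (a b : ℂ) (ξ η : Fin n → ℝ) :
    ∑ i ∈ s, weighted (f i) a b ξ η = weighted (∑ i ∈ s, f i) a b ξ η := by
  simp only [weighted, map_sum, Finset.sum_mul]

theorem weighted_sqNormLeft_mul_sqNormRight_mul (q : MvPolynomial (Fin n ⊕ Fin n) ℂ) (a b : ℂ) :
    EqOnPunctured (weighted (sqNormLeft n * sqNormRight n * q) (a - 1) (b - 1))
      (weighted q a b) := by
  intro ξ η hξ hη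
  simp only [weighted, map_mul, eval_sqNormLeft, eval_sqNormRight]
  rw [cpow_eq_cpow_sub_one_mul (sqNorm_ne_zero hξ) a,
    cpow_eq_cpow_sub_one_mul (sqNorm_ne_zero hη) b]
  ring

theorem eventually_update_ne_zero {ξ : Fin n → ℝ} (hξ : ξ ≠ 0) (i : Fin n) :
    ∀ᶠ t in nhds (ξ i), Function.update ξ i t ≠ 0 :=
  (continuous_const.update i continuous_id).continuousAt.eventually_ne
    (by rwa [id, Function.update_eq_self])

namespace EqOnPunctured

variable {f g h : (Fin n → ℝ) → (Fin n → ℝ) → ℂ}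

theorem trans (hfg : EqOnPunctured f g) (hgh : EqOnPunctured g h) : EqOnPunctured f h :=
  fun ξ η hξ hη => (hfg ξ η hξ hη).trans (hgh ξ η hξ hη)

theorem pd1 (hfg : EqOnPunctured f g) (i : Fin n) : EqOnPunctured (pd1 i f) (pd1 i g) :=
  fun _ η hξ hη => Filter.EventuallyEq.deriv_eq <| by
    filter_upwards [eventually_update_ne_zero hξ i] with t ht using hfg _ η ht hη

theorem pd2 (hfg : EqOnPunctured f g) (i : Fin n) : EqOnPunctured (pd2 i f) (pd2 i g) :=
  fun ξ _ hξ hη => Filter.EventuallyEq.deriv_eq <| by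
    filter_upwards [eventually_update_ne_zero hη i] with t ht using hfg ξ _ hξ ht

theorem Dj (hfg : EqOnPunctured f g) (i : Fin n) : EqOnPunctured (Dj i f) (Dj i g) :=
  fun ξ η hξ hη => congr_arg₂ (· - ·) (hfg.pd1 i ξ η hξ hη) (hfg.pd2 i ξ η hξ hη)

theorem Qop (hfg : EqOnPunctured f g) : EqOnPunctured (Qop f) (Qop g) :=
  fun ξ η hξ hη => Finset.sum_congr rfl fun i _ => (hfg.Dj i).Dj i ξ η hξ hη

end EqOnPunctured

theorem Qop_weighted (p : MvPolynomial (Fin n ⊕ Fin n) ℂ) (a b : ℂ) :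
    EqOnPunctured (Qop (weighted p a b)) (weighted (qopPoly a b p) (a - 1) (b - 1)) := by
  intro ξ η hξ hη
  calc Qop (weighted p a b) ξ η
      = ∑ i, Dj i (weighted (djPoly a b i p) (a - 1) (b - 1)) ξ η :=
        Finset.sum_congr rfl fun i _ => (Dj_weighted p a b i).Dj i ξ η hξ hη
    _ = ∑ i, weighted (djPoly (a - 1) (b - 1) i (djPoly a b i p)) (a - 1 - 1) (b - 1 - 1) ξ η :=
        Finset.sum_congr rfl fun i _ => Dj_weighted _ _ _ i ξ η hξ hη
    _ = weighted (qopPoly a b p) (a - 1) (b - 1) ξ η := by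
        rw [weighted_sum, sum_djPoly_djPoly]
        exact weighted_sqNormLeft_mul_sqNormRight_mul _ _ _ ξ η hξ hη

theorem iterate_Qop_weighted_one (a b : ℂ) (k : ℕ) :
    EqOnPunctured (Qop^[k] (weighted (n := n) 1 a b))
      (weighted (qopIterPoly a b k) (a - k) (b - k)) := by
  induction k with
  | zero => intro ξ η _ _; simp [qopIterPoly]
  | succ k ih =>
    rw [Function.iterate_succ_apply', Nat.cast_succ, ← sub_sub, ← sub_sub]
    exact ih.Qop.trans (Qop_weighted _ _ _)

end Calculus

theorem stmt14 (n : ℕ) (α β : ℂ) (k : ℕ) :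
    ∃ p : MvPolynomial (Fin n ⊕ Fin n) ℂ,
      p.IsHomogeneous (2 * k) ∧ (k = 0 → p = 1) ∧
      ∀ ξ η : Fin n → ℝ, ξ ≠ 0 → η ≠ 0 →
        (Qop^[k] (fun u v =>
            ((∑ j, u j ^ 2 : ℝ) : ℂ) ^ (α + k) * ((∑ j, v j ^ 2 : ℝ) : ℂ) ^ (β + k))) ξ η
          = MvPolynomial.eval (Sum.elim (fun j => (ξ j : ℂ)) (fun j => (η j : ℂ))) p *
              ((∑ j, ξ j ^ 2 : ℝ) : ℂ) ^ α * ((∑ j, η j ^ 2 : ℝ) : ℂ) ^ β := by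
  refine ⟨qopIterPoly (α + k) (β + k) k, isHomogeneous_qopIterPoly _ _ k,
    by rintro rfl; rfl, fun ξ η hξ hη => ?_⟩
  have hpow : (fun u v : Fin n → ℝ =>
      ((∑ j, u j ^ 2 : ℝ) : ℂ) ^ (α + k) * ((∑ j, v j ^ 2 : ℝ) : ℂ) ^ (β + k))
        = weighted 1 (α + k) (β + k) := by
    ext u v
    simp [weighted, sqNorm]
  rw [hpow, iterate_Qop_weighted_one _ _ k ξ η hξ hη, add_sub_cancel_right, add_sub_cancel_right]
  rfl
end
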